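/- arXiv:0904.0273 — 2 statements merged into one kernel-verified Lean document; each statement's English description precedes it below -/
import Mathlib

section
/- Let X be a compact complex four-fold with trivial canonical bundle and suppose X̃ → X is an unramified degree d cover where X̃ is the product of two K3 surfaces. Then d = 1 or d = 2. -/
/-- An abstract interface for compact complex manifolds, recording the
dimensions `h^k(M, O_M)` of the cohomology of the structure sheaf, the
dimensions `h⁰(M, Ω^k_M)` of the spaces of holomorphic `k`-forms, and the
relation `Cover Y X d` meaning that there is an unramified (holomorphic)
covering map `Y → X` of degree `d`. -/
structure ComplexManifoldTheory where
  Mfd : Type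
  /-- complex dimension -/
  dim : Mfd → ℕ
  /-- `h M k = dim_ℂ H^k(M, O_M)` -/
  h : Mfd → ℕ → ℕ
  /-- `hForm M k = dim_ℂ H⁰(M, Ω^k_M)` -/
  hForm : Mfd → ℕ → ℕ
  /-- `Cover Y X d` : there is an unramified degree `d` covering `Y → X` -/
  Cover : Mfd → Mfd → ℕ → Prop
  h_top : ∀ M k, dim M < k → h M k = 0
  /-- Hodge theory: `h^k(O_M) = h⁰(Ω^k_M)` -/
  hodge : ∀ M k, h M k = hForm M k
  cover_dim : ∀ {Y X : Mfd} {d : ℕ}, Cover Y X d → dim Y = dim X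
  /-- holomorphic forms pull back injectively along an unramified covering -/
  cover_hForm : ∀ {Y X : Mfd} {d : ℕ}, Cover Y X d → ∀ k, hForm X k ≤ hForm Y k
  /-- multiplicativity of the holomorphic Euler characteristic (equivalently,
  of the Todd genus) under finite unramified covers -/
  cover_chi : ∀ {Y X : Mfd} {d : ℕ}, Cover Y X d →
    (∑ k ∈ Finset.range (dim Y + 1), (-1 : ℤ) ^ k * h Y k)
      = d * ∑ k ∈ Finset.range (dim X + 1), (-1 : ℤ) ^ k * h X k

/-- The holomorphic Euler characteristic `χ(O_M) = Σ (-1)^k h^k(M, O_M)`. -/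
def ComplexManifoldTheory.chi (T : ComplexManifoldTheory) (M : T.Mfd) : ℤ :=
  ∑ k ∈ Finset.range (T.dim M + 1), (-1 : ℤ) ^ k * T.h M k

namespace ComplexManifoldTheory

variable {T : ComplexManifoldTheory}

theorem chi_eq_of_dim_eq_four {M : T.Mfd} (hM : T.dim M = 4) :
    T.chi M = T.h M 0 - T.h M 1 + T.h M 2 - T.h M 3 + T.h M 4 := by
  simp [chi, hM, Finset.sum_range_succ]
  ring

namespace Cover

variable {Y X : T.Mfd} {d : ℕ}

theorem h_le (hcov : T.Cover Y X d) (k : ℕ) : T.h X k ≤ T.h Y k := by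
  rw [T.hodge X k, T.hodge Y k]
  exact T.cover_hForm hcov k

theorem h_eq_zero (hcov : T.Cover Y X d) {k : ℕ} (hk : T.h Y k = 0) : T.h X k = 0 :=
  Nat.le_zero.mp (hk ▸ hcov.h_le k)

theorem chi_eq (hcov : T.Cover Y X d) : T.chi Y = d * T.chi X :=
  T.cover_chi hcov

end Cover

end ComplexManifoldTheory

theorem eq_one_or_two_of_four_eq_mul {d : ℕ} {c : ℤ} (hc : 2 ≤ c) (h : 4 = d * c) :
    d = 1 ∨ d = 2 := by
  have hd_le : (d : ℤ) ≤ 2 := by nlinarith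
  have hd_ne : d ≠ 0 := by
    rintro rfl
    simp at h
  omega

theorem cover_of_K3_product_degree_general (T : ComplexManifoldTheory)
    (Y X : T.Mfd) (d : ℕ) (hcov : T.Cover Y X d)
    (hdimX : T.dim X = 4)
    (hY0 : T.h Y 0 = 1) (hY1 : T.h Y 1 = 0) (hY2 : T.h Y 2 = 2)
    (hY3 : T.h Y 3 = 0) (hY4 : T.h Y 4 = 1)
    (hX0 : T.h X 0 = 1) (hX4 : T.h X 4 = 1) :
    d = 1 ∨ d = 2 := by
  have hdimY : T.dim Y = 4 := (T.cover_dim hcov).trans hdimX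
  have hchi := hcov.chi_eq
  rw [T.chi_eq_of_dim_eq_four hdimY, T.chi_eq_of_dim_eq_four hdimX, hY0, hY1, hY2, hY3, hY4,
    hX0, hX4, hcov.h_eq_zero hY1, hcov.h_eq_zero hY3] at hchi
  push_cast at hchi
  -- `χ(O_X) = 2 + h²(O_X) ≥ 2` divides `χ(O_Y) = 4`.
  exact eq_one_or_two_of_four_eq_mul (c := 2 + T.h X 2) (by omega) (by linear_combination hchi)

/-- Let `X` be a compact complex four-fold with trivial canonical bundle
(so `h⁰(O_X) = 1` and `h⁴(O_X) = h⁰(K_X) = 1`), and suppose `Y → X` is an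
unramified degree `d` cover where `Y` is the product of two K3 surfaces
(so `h^•(O_Y) = (1, 0, 2, 0, 1)`).  Then `d = 1` or `d = 2`. -/
theorem cover_of_K3_product_degree (T : ComplexManifoldTheory)
    (Y X : T.Mfd) (d : ℕ) (hd : 0 < d) (hcov : T.Cover Y X d)
    (hdimX : T.dim X = 4)
    (hY0 : T.h Y 0 = 1) (hY1 : T.h Y 1 = 0) (hY2 : T.h Y 2 = 2)
    (hY3 : T.h Y 3 = 0) (hY4 : T.h Y 4 = 1)
    (hX0 : T.h X 0 = 1) (hX4 : T.h X 4 = 1) :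
    d = 1 ∨ d = 2 :=
  cover_of_K3_product_degree_general T Y X d hcov hdimX hY0 hY1 hY2 hY3 hY4 hX0 hX4
end

section
/- Let E_3 = C/⟨1, τ_3⟩ and E_4 = C/⟨1, τ_4⟩ be elliptic curves, and define maps on E_3 × E_4 by γ_1.(z_3,z_4) = (z_3 + 1/2, -z_4 + 1/4), γ_2.(z_3,z_4) = (z_3 + 1/2, -z_4 + 3/4), γ_3.(z_3,z_4) = (z_3 + τ_3/2, -z_4). Then every non-trivial element of the group generated by γ_1, γ_2, γ_3 acts without fixed points on E_3 × E_4, and γ_1γ_3 is the translation by (1/2 + τ_3/2, 1/4), of order four. -/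
/-!
Every element of the group is of the form `(z₃, z₄) ↦ (k/2 + lτ₃/2 + z₃, b ± z₄)` with sign
`(-1)^(k+l)`: the generators have this shape, and it is stable under composition and inversion.
Such a map with sign `+1` is a translation, hence fixed-point free unless trivial. With sign `-1`
the integer `k + l` is odd, so `k/2 + lτ₃/2` is not a period of `E₃` and the first coordinate
moves every point.
-/

open Equiv

section
variable {A B : Type*} [AddCommGroup A] [AddCommGroup B]

def affinePerm (a : A) (s : ℤˣ) (b : B) : Perm (A × B) :=
  (Equiv.addLeft a).prodCongr ((MulAction.toPerm s).trans (Equiv.addLeft b))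

@[simp]
lemma affinePerm_apply (a : A) (s : ℤˣ) (b : B) (p : A × B) :
    affinePerm a s b p = (a + p.1, b + s • p.2) := rfl

@[simp]
lemma affinePerm_zero_one_zero : affinePerm (0 : A) 1 (0 : B) = 1 := by
  ext p <;> simp

lemma affinePerm_mul (a a' : A) (s s' : ℤˣ) (b b' : B) :
    affinePerm a s b * affinePerm a' s' b' = affinePerm (a + a') (s * s') (b + s • b') := by
  ext p <;> simp [mul_smul, add_assoc]

lemma affinePerm_inv (a : A) (s : ℤˣ) (b : B) :
    (affinePerm a s b)⁻¹ = affinePerm (-a) s (-(s • b)) := by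
  rw [inv_eq_iff_mul_eq_one, affinePerm_mul, smul_neg, smul_smul, Int.units_mul_self]
  simp

lemma orderOf_prodCongr_addLeft (a : A) (b : B) :
    orderOf ((Equiv.addLeft a).prodCongr (Equiv.addLeft b)) = addOrderOf (a, b) := by
  have : (Equiv.addLeft a).prodCongr (Equiv.addLeft b) = Equiv.addLeft (a, b) := by
    ext p <;> simp
  rw [this, ← addOrderOf_ofMul_eq_orderOf]
  exact addOrderOf_injective (AddAction.toPermHom (A × B) (A × B)) AddAction.toPerm_injective (a, b)

def parityAffineSubgroup (ω₁ ω₂ : A) : Subgroup (Perm (A × B)) where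
  carrier := {g | ∃ k l : ℤ, ∃ b : B, g = affinePerm (k • ω₁ + l • ω₂) ((-1) ^ (k + l)) b}
  one_mem' := ⟨0, 0, 0, by simp⟩
  mul_mem' := by
    rintro _ _ ⟨k, l, b, rfl⟩ ⟨k', l', b', rfl⟩
    refine ⟨k + k', l + l', b + ((-1 : ℤˣ) ^ (k + l)) • b', ?_⟩
    rw [affinePerm_mul, ← zpow_add, add_zsmul, add_zsmul, add_add_add_comm k, add_add_add_comm]
  inv_mem' := by
    rintro _ ⟨k, l, b, rfl⟩
    refine ⟨-k, -l, -(((-1 : ℤˣ) ^ (k + l)) • b), ?_⟩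
    rw [affinePerm_inv, neg_add, neg_zsmul, neg_zsmul, ← neg_add k, zpow_neg, Int.units_inv_eq_self]

lemma apply_ne_self_of_mem_parityAffineSubgroup {ω₁ ω₂ : A}
    (hω : ∀ k l : ℤ, k • ω₁ + l • ω₂ = 0 → Even (k + l)) {g : Perm (A × B)}
    (hg : g ∈ parityAffineSubgroup ω₁ ω₂) (hne : g ≠ 1) (p : A × B) : g p ≠ p := by
  obtain ⟨k, l, b, rfl⟩ := hg
  intro hp
  obtain ⟨ha, hb⟩ := Prod.ext_iff.1 hp
  simp only [affinePerm_apply, add_eq_right] at ha hb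
  rw [(hω k l ha).neg_one_zpow, one_smul, add_eq_right] at hb
  exact hne (by rw [ha, hb, (hω k l ha).neg_one_zpow, affinePerm_zero_one_zero])

end

lemma even_of_zsmul_half_periods_eq_zero {τ : ℂ} (hτ : τ.im ≠ 0) {k l : ℤ}
    (h : k • (QuotientAddGroup.mk (1 / 2) : ℂ ⧸ AddSubgroup.closure {1, τ}) +
      l • QuotientAddGroup.mk (τ / 2) = 0) : Even k ∧ Even l := by
  rw [← QuotientAddGroup.mk_zsmul, ← QuotientAddGroup.mk_zsmul, ← QuotientAddGroup.mk_add,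
    QuotientAddGroup.eq_zero_iff, AddSubgroup.mem_closure_pair] at h
  obtain ⟨m, n, hmn⟩ := h
  have him := congrArg Complex.im hmn
  have hre := congrArg Complex.re hmn
  simp only [zsmul_eq_mul, mul_one, Complex.add_im, Complex.intCast_im, Complex.mul_im,
    Complex.intCast_re, zero_mul, add_zero, zero_add, one_div, Complex.inv_im, Complex.im_ofNat,
    neg_zero, Complex.normSq_ofNat, zero_div, mul_zero, Complex.inv_re, Complex.re_ofNat,
    div_self_mul_self', Complex.div_ofNat_im, Complex.div_ofNat_re, Complex.add_re,
    Complex.mul_re, sub_zero] at him hre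
  have hl : (l : ℝ) = 2 * n := mul_right_cancel₀ hτ (by linear_combination (-2) * him)
  have hk : (k : ℝ) = 2 * m := by linear_combination (-2) * hre - τ.re * hl
  exact ⟨⟨m, by exact_mod_cast hk.trans (two_mul _)⟩, ⟨n, by exact_mod_cast hl.trans (two_mul _)⟩⟩

lemma addOrderOf_mk_half_add_half_mk_quarter {τ₃ τ₄ : ℂ} (hτ₄ : τ₄.im ≠ 0) :
    addOrderOf ((QuotientAddGroup.mk (1 / 2 + τ₃ / 2) : ℂ ⧸ AddSubgroup.closure {1, τ₃}),
      (QuotientAddGroup.mk (1 / 4) : ℂ ⧸ AddSubgroup.closure {1, τ₄})) = 4 := by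
  refine addOrderOf_eq_prime_pow (p := 2) (n := 1) (fun h => ?_) ?_
  · refine Int.not_even_one (even_of_zsmul_half_periods_eq_zero hτ₄ (k := 1) (l := 0) ?_).1
    have h₄ : 2 • (QuotientAddGroup.mk (1 / 4) : ℂ ⧸ AddSubgroup.closure {1, τ₄}) = 0 :=
      congrArg Prod.snd h
    rw [one_zsmul, zero_zsmul, add_zero, ← h₄, ← QuotientAddGroup.mk_nsmul]
    congr 1
    norm_num
  · have h₃ : 2 ^ (1 + 1) • (1 / 2 + τ₃ / 2) ∈ AddSubgroup.closure {1, τ₃} :=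
      AddSubgroup.mem_closure_pair.2 ⟨2, 2, by norm_num; ring⟩
    have h₄ : 2 ^ (1 + 1) • (1 / 4 : ℂ) ∈ AddSubgroup.closure {1, τ₄} :=
      AddSubgroup.mem_closure_pair.2 ⟨1, 0, by norm_num⟩
    exact Prod.ext ((QuotientAddGroup.eq_zero_iff _).2 h₃) ((QuotientAddGroup.eq_zero_iff _).2 h₄)

/-- Let `E₃ = ℂ/⟨1, τ₃⟩` and `E₄ = ℂ/⟨1, τ₄⟩` be elliptic curves and define
holomorphic automorphisms of `E₃ × E₄` by
`γ₁ : (z₃, z₄) ↦ (z₃ + 1/2, -z₄ + 1/4)`,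
`γ₂ : (z₃, z₄) ↦ (z₃ + 1/2, -z₄ + 3/4)`,
`γ₃ : (z₃, z₄) ↦ (z₃ + τ₃/2, -z₄)`.
Then every non-trivial element of the group generated by `γ₁, γ₂, γ₃` acts
without fixed points on `E₃ × E₄`, and `γ₁γ₃` is the translation by
`(1/2 + τ₃/2, 1/4)`, of order four. -/
theorem free_dihedral_action_on_abelian_surface
    (τ₃ τ₄ : ℂ) (hτ₃ : τ₃.im ≠ 0) (hτ₄ : τ₄.im ≠ 0) :
    let Λ₃ : AddSubgroup ℂ := AddSubgroup.closure {1, τ₃}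
    let Λ₄ : AddSubgroup ℂ := AddSubgroup.closure {1, τ₄}
    let E₃ := ℂ ⧸ Λ₃
    let E₄ := ℂ ⧸ Λ₄
    let q₃ : ℂ → E₃ := QuotientAddGroup.mk
    let q₄ : ℂ → E₄ := QuotientAddGroup.mk
    let γ₁ : Equiv.Perm (E₃ × E₄) :=
      (Equiv.addLeft (q₃ (1/2))).prodCongr ((Equiv.neg E₄).trans (Equiv.addLeft (q₄ (1/4))))
    let γ₂ : Equiv.Perm (E₃ × E₄) :=
      (Equiv.addLeft (q₃ (1/2))).prodCongr ((Equiv.neg E₄).trans (Equiv.addLeft (q₄ (3/4))))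
    let γ₃ : Equiv.Perm (E₃ × E₄) :=
      (Equiv.addLeft (q₃ (τ₃/2))).prodCongr (Equiv.neg E₄)
    (∀ g ∈ Subgroup.closure {γ₁, γ₂, γ₃}, g ≠ 1 → ∀ p : E₃ × E₄, g p ≠ p) ∧
      γ₁ * γ₃ =
        (Equiv.addLeft (q₃ (1/2 + τ₃/2))).prodCongr (Equiv.addLeft (q₄ (1/4))) ∧
      orderOf (γ₁ * γ₃) = 4 := by
  intro Λ₃ Λ₄ E₃ E₄ q₃ q₄ γ₁ γ₂ γ₃
  have hγ : {γ₁, γ₂, γ₃} ⊆ (parityAffineSubgroup (B := E₄) (q₃ (1/2)) (q₃ (τ₃/2)) : Set _) := by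
    rintro _ (rfl | rfl | rfl)
    · exact ⟨1, 0, q₄ (1/4), by ext p <;> simp [γ₁]⟩
    · exact ⟨1, 0, q₄ (3/4), by ext p <;> simp [γ₂]⟩
    · exact ⟨0, 1, 0, by ext p <;> simp [γ₃]⟩
  have hprod : γ₁ * γ₃ =
      (Equiv.addLeft (q₃ (1/2 + τ₃/2))).prodCongr (Equiv.addLeft (q₄ (1/4))) := by
    ext p <;> simp [γ₁, γ₃, q₃, add_assoc]
  refine ⟨fun g hg => apply_ne_self_of_mem_parityAffineSubgroup
    (fun k l h => (even_of_zsmul_half_periods_eq_zero hτ₃ h).elim Even.add)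
    (Subgroup.closure_le _ |>.2 hγ hg), hprod, ?_⟩
  rw [hprod, orderOf_prodCongr_addLeft, addOrderOf_mk_half_add_half_mk_quarter hτ₄]
end
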